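/- In the ISCP dynamic-programming setting, suppose index j+1 exists and blk(j+1) = blk(j) + 1 (i.e., S_{j+1} is the first set of its block and a previous block exists). Then for every W ⊆ α: OPT(W, j+1, 2) = 2 + OPT(W \ S_{j+1}, j, flag(blk(j))), where arithmetic is in ℕ ∪ {∞} with 2 + ∞ = ∞. -/

import Mathlib

/-!
Every admissible index set for `OPT(W, j+1, 2)` must meet the new block `blk(j+1)`, and the only
index `≤ j+1` in that block is `j+1` itself. Hence `X ↦ insert (j+1) X` is a bijection from the
admissible sets for `OPT(W \ S_{j+1}, j, flag(blk j))` onto those for `OPT(W, j+1, 2)`; it adds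
`2` to `2|X|` and leaves the missed flag-`1` blocks unchanged, because the new block has flag `2`.
-/

/-- `OPTI S blk flag W j b` in the ISCP dynamic-programming setting: the infimum, over
all index sets `X ⊆ {i : i ≤ j}` covering `W`, containing at most one index from every
block `β_x` with `x ≤ blk j` and exactly one index from every such block whose (updated)
flag is `2`, of `2|X|` plus the number of blocks `β_x` (`x ≤ blk j`) with (updated) flag
`1` that `X` misses; here the flag of block `blk j` is overridden to be `b`.  The value
is `∞` if no such `X` exists. -/
noncomputable def OPTI {α : Type*} [DecidableEq α] {m q : ℕ}
    (S : Fin m → Finset α) (blk : Fin m → Fin q) (flag : Fin q → ℕ)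
    (W : Finset α) (j : Fin m) (b : ℕ) : ℕ∞ :=
  sInf { n : ℕ∞ | ∃ X : Finset (Fin m),
    (∀ i ∈ X, i ≤ j) ∧
    (W ⊆ X.biUnion S) ∧
    (∀ x : Fin q, x ≤ blk j → (X.filter (fun i => blk i = x)).card ≤ 1) ∧
    (∀ x : Fin q, x ≤ blk j → Function.update flag (blk j) b x = 2 →
      (X.filter (fun i => blk i = x)).card = 1) ∧
    n = 2 * (X.card : ℕ∞) +
      ((Finset.univ.filter (fun x : Fin q =>
        x ≤ blk j ∧ Function.update flag (blk j) b x = 1 ∧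
          ∀ i ∈ X, blk i ≠ x)).card : ℕ∞) }

open Finset Function

lemma Fin.le_iff_le_or_eq_of_val_eq_succ {n : ℕ} {a b x : Fin n} (hab : (b : ℕ) = a + 1) :
    x ≤ b ↔ x ≤ a ∨ x = b := by
  simp only [Fin.le_def, Fin.ext_iff]
  omega

namespace ISCP

variable {α : Type*} [DecidableEq α] {m q : ℕ}

structure IsAdmissible (S : Fin m → Finset α) (blk : Fin m → Fin q) (flag : Fin q → ℕ)
    (W : Finset α) (j : Fin m) (b : ℕ) (X : Finset (Fin m)) : Prop where
  le_of_mem : ∀ i ∈ X, i ≤ j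
  subset_biUnion : W ⊆ X.biUnion S
  card_block_le_one : ∀ x ≤ blk j, #(X.filter (fun i => blk i = x)) ≤ 1
  card_block_eq_one : ∀ x ≤ blk j, update flag (blk j) b x = 2 →
    #(X.filter (fun i => blk i = x)) = 1

def missedBlocks (blk : Fin m → Fin q) (flag : Fin q → ℕ) (j : Fin m) (b : ℕ)
    (X : Finset (Fin m)) : Finset (Fin q) :=
  univ.filter fun x => x ≤ blk j ∧ update flag (blk j) b x = 1 ∧ ∀ i ∈ X, blk i ≠ x

def cost (blk : Fin m → Fin q) (flag : Fin q → ℕ) (j : Fin m) (b : ℕ)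
    (X : Finset (Fin m)) : ℕ∞ :=
  2 * (#X : ℕ∞) + (#(missedBlocks blk flag j b X) : ℕ∞)

lemma OPTI_eq_iInf (S : Fin m → Finset α) (blk : Fin m → Fin q) (flag : Fin q → ℕ)
    (W : Finset α) (j : Fin m) (b : ℕ) :
    OPTI S blk flag W j b = ⨅ X ∈ {X | IsAdmissible S blk flag W j b X}, cost blk flag j b X := by
  rw [OPTI, ← sInf_image]
  congr 1
  ext n
  constructor
  · rintro ⟨X, h₁, h₂, h₃, h₄, rfl⟩
    exact ⟨X, ⟨h₁, h₂, h₃, h₄⟩, rfl⟩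
  · rintro ⟨X, ⟨h₁, h₂, h₃, h₄⟩, rfl⟩
    exact ⟨X, h₁, h₂, h₃, h₄, rfl⟩

variable {S : Fin m → Finset α} {blk : Fin m → Fin q} {flag : Fin q → ℕ} {W : Finset α}
  {j j' : Fin m} {X : Finset (Fin m)}

lemma blk_ne_of_le (hmono : Monotone blk) (hblk : (blk j' : ℕ) = blk j + 1) {i : Fin m}
    (hi : i ≤ j) : blk i ≠ blk j' := by
  have := Fin.le_def.1 (hmono hi)
  rw [ne_eq, Fin.ext_iff]
  omega

lemma ne_blk_of_le (hblk : (blk j' : ℕ) = blk j + 1) {x : Fin q} (hx : x ≤ blk j) :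
    blk j' ≠ x := by
  rw [Fin.le_def] at hx
  rw [ne_eq, Fin.ext_iff]
  omega

lemma filter_blk_insert_of_le (hblk : (blk j' : ℕ) = blk j + 1) {x : Fin q} (hx : x ≤ blk j) :
    (insert j' X).filter (fun i => blk i = x) = X.filter (fun i => blk i = x) := by
  rw [filter_insert, if_neg (ne_blk_of_le hblk hx)]

lemma card_filter_blk_insert_self (hmono : Monotone blk) (hblk : (blk j' : ℕ) = blk j + 1)
    (hX : ∀ i ∈ X, i ≤ j) : #((insert j' X).filter (fun i => blk i = blk j')) = 1 := by
  have hempty : X.filter (fun i => blk i = blk j') = ∅ :=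
    filter_eq_empty_iff.2 fun i hi => blk_ne_of_le hmono hblk (hX i hi)
  rw [filter_insert, if_pos rfl, hempty, insert_empty, card_singleton]

lemma missedBlocks_insert (hblk : (blk j' : ℕ) = blk j + 1) (X : Finset (Fin m)) :
    missedBlocks blk flag j' 2 (insert j' X) = missedBlocks blk flag j (flag (blk j)) X := by
  ext x
  simp only [missedBlocks, mem_filter, mem_univ, true_and, mem_insert, forall_eq_or_imp,
    update_eq_self, Fin.le_iff_le_or_eq_of_val_eq_succ hblk]
  by_cases hx : x ≤ blk j
  · simp [hx, update_of_ne (ne_blk_of_le hblk hx).symm, ne_blk_of_le hblk hx]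
  · simp only [hx, false_or, false_and, iff_false, not_and]
    rintro rfl
    simp

lemma cost_insert (hblk : (blk j' : ℕ) = blk j + 1) (hX : j' ∉ X) :
    cost blk flag j' 2 (insert j' X) = 2 + cost blk flag j (flag (blk j)) X := by
  rw [cost, cost, missedBlocks_insert hblk, card_insert_of_notMem hX]
  push_cast
  ring

lemma IsAdmissible.insert (hmono : Monotone blk) (hj' : (j' : ℕ) = j + 1)
    (hblk : (blk j' : ℕ) = blk j + 1) (h : IsAdmissible S blk flag (W \ S j') j (flag (blk j)) X) :
    IsAdmissible S blk flag W j' 2 (insert j' X) where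
  le_of_mem i hi := by
    rcases mem_insert.1 hi with rfl | hi
    · exact le_rfl
    · exact (Fin.le_iff_le_or_eq_of_val_eq_succ hj').2 (.inl (h.le_of_mem i hi))
  subset_biUnion a ha := by
    by_cases haS : a ∈ S j'
    · exact mem_biUnion.2 ⟨j', mem_insert_self _ _, haS⟩
    · obtain ⟨i, hi, hai⟩ := mem_biUnion.1 (h.subset_biUnion (mem_sdiff.2 ⟨ha, haS⟩))
      exact mem_biUnion.2 ⟨i, mem_insert_of_mem hi, hai⟩
  card_block_le_one x hx := by
    rcases (Fin.le_iff_le_or_eq_of_val_eq_succ hblk).1 hx with hx | rfl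
    · rw [filter_blk_insert_of_le hblk hx]
      exact h.card_block_le_one x hx
    · exact (card_filter_blk_insert_self hmono hblk h.le_of_mem).le
  card_block_eq_one x hx hfl := by
    rcases (Fin.le_iff_le_or_eq_of_val_eq_succ hblk).1 hx with hx | rfl
    · rw [filter_blk_insert_of_le hblk hx]
      rw [update_of_ne (ne_blk_of_le hblk hx).symm] at hfl
      exact h.card_block_eq_one x hx (by rwa [update_eq_self])
    · exact card_filter_blk_insert_self hmono hblk h.le_of_mem

lemma IsAdmissible.mem_of_succ_block (hmono : Monotone blk) (hj' : (j' : ℕ) = j + 1)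
    (hblk : (blk j' : ℕ) = blk j + 1) (h : IsAdmissible S blk flag W j' 2 X) : j' ∈ X := by
  have hcard := h.card_block_eq_one (blk j') le_rfl (update_self _ _ _)
  obtain ⟨i, hi⟩ := card_pos.1 (hcard ▸ one_pos)
  obtain ⟨hiX, hib⟩ := mem_filter.1 hi
  rcases (Fin.le_iff_le_or_eq_of_val_eq_succ hj').1 (h.le_of_mem i hiX) with hij | rfl
  · exact absurd hib (blk_ne_of_le hmono hblk hij)
  · exact hiX

lemma IsAdmissible.erase (hmono : Monotone blk) (hj' : (j' : ℕ) = j + 1)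
    (hblk : (blk j' : ℕ) = blk j + 1) (h : IsAdmissible S blk flag W j' 2 X) :
    IsAdmissible S blk flag (W \ S j') j (flag (blk j)) (X.erase j') where
  le_of_mem i hi := by
    obtain ⟨hne, hiX⟩ := mem_erase.1 hi
    exact ((Fin.le_iff_le_or_eq_of_val_eq_succ hj').1 (h.le_of_mem i hiX)).resolve_right hne
  subset_biUnion a ha := by
    obtain ⟨haW, haS⟩ := mem_sdiff.1 ha
    obtain ⟨i, hiX, hai⟩ := mem_biUnion.1 (h.subset_biUnion haW)
    exact mem_biUnion.2 ⟨i, mem_erase.2 ⟨fun hij => haS (hij ▸ hai), hiX⟩, hai⟩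
  card_block_le_one x hx :=
    (card_le_card (filter_subset_filter _ (erase_subset _ _))).trans
      (h.card_block_le_one x ((Fin.le_iff_le_or_eq_of_val_eq_succ hblk).2 (.inl hx)))
  card_block_eq_one x hx hfl := by
    rw [update_eq_self] at hfl
    rw [← filter_blk_insert_of_le hblk hx, insert_erase (h.mem_of_succ_block hmono hj' hblk)]
    exact h.card_block_eq_one x ((Fin.le_iff_le_or_eq_of_val_eq_succ hblk).2 (.inl hx))
      (by rwa [update_of_ne (ne_blk_of_le hblk hx).symm])

lemma setOf_isAdmissible_succ_block (hmono : Monotone blk) (hj' : (j' : ℕ) = j + 1)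
    (hblk : (blk j' : ℕ) = blk j + 1) :
    {X | IsAdmissible S blk flag W j' 2 X} =
      insert j' '' {X | IsAdmissible S blk flag (W \ S j') j (flag (blk j)) X} := by
  ext X
  constructor
  · intro h
    exact ⟨X.erase j', h.erase hmono hj' hblk,
      insert_erase (h.mem_of_succ_block hmono hj' hblk)⟩
  · rintro ⟨Y, hY, rfl⟩
    exact hY.insert hmono hj' hblk

end ISCP

theorem iscp_recurrence_new_block_flag_two_general
    {α : Type*} [DecidableEq α] {m q : ℕ}
    (S : Fin m → Finset α) (blk : Fin m → Fin q)
    (hmono : Monotone blk)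
    (flag : Fin q → ℕ)
    (j j' : Fin m) (hj' : (j' : ℕ) = (j : ℕ) + 1)
    (hblk : (blk j' : ℕ) = (blk j : ℕ) + 1)
    (W : Finset α) :
    OPTI S blk flag W j' 2 = 2 + OPTI S blk flag (W \ S j') j (flag (blk j)) := by
  rw [ISCP.OPTI_eq_iInf, ISCP.OPTI_eq_iInf, ISCP.setOf_isAdmissible_succ_block hmono hj' hblk,
    iInf_image, ENat.add_iInf₂]
  refine iInf_congr fun X => iInf_congr fun hX => ISCP.cost_insert hblk fun hj'X => ?_
  have := Fin.le_def.1 (hX.le_of_mem j' hj'X)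
  omega

/-- ISCP recurrence when `S_{j+1}` is the first set of its block and a
previous block exists, for flag `b = 2`:
`OPT(W, j+1, 2) = 2 + OPT(W \\ S_{j+1}, j, flag(blk j))`. -/
theorem iscp_recurrence_new_block_flag_two
    {α : Type*} [DecidableEq α] {m q : ℕ} (hm : 0 < m) (hq : 0 < q)
    (S : Fin m → Finset α) (blk : Fin m → Fin q)
    (hmono : Monotone blk) (hsurj : Function.Surjective blk)
    (flag : Fin q → ℕ) (hflag : ∀ x, flag x = 1 ∨ flag x = 2)
    (j j' : Fin m) (hj' : (j' : ℕ) = (j : ℕ) + 1)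
    (hblk : (blk j' : ℕ) = (blk j : ℕ) + 1)
    (W : Finset α) :
    OPTI S blk flag W j' 2 = 2 + OPTI S blk flag (W \ S j') j (flag (blk j)) :=
  iscp_recurrence_new_block_flag_two_general S blk hmono flag j j' hj' hblk W
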